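/- arXiv:1411.0564 — 4 statements merged into one kernel-verified Lean document; each statement's English description precedes it below -/
import Mathlib

section
/- With the setup below, define B_G = (1/(r² n_d)) Σ_{d∈{0,…,r−1}²} Σ_{j=1}^{n_d} ( exp(i q_γ·b_{dj}) − E[exp(i q_γ·b_{dj})] ). If q_γ ≠ 0, then for every c > 0, P( |Re(B_G)| ≥ c‖q_γ‖₁ ε + ‖q_γ‖₁⁴ ε_r⁴ / 12 ) ≤ 2 exp( − c² n_d / (2 ‖q_γ‖₁² ε_r²) ). -/
/-! Up to the factor `(r² n_d)⁻¹`, `Re B_G` is the sum of the `r² n_d` independent centred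
variables `cos (q·b_{dj}) - E cos (q·b_{dj})`. As `|q·b_{dj}| ≤ ‖q‖₁ ε_r`, each cosine lies in
`[1 - ‖q‖₁² ε_r² / 2, 1]`, so Hoeffding's inequality at level `r² n_d c ‖q‖₁ ε` (the nonnegative
quartic term of the threshold is dropped) gives the tail bound `2 exp (-8 c² n_d / (‖q‖₁² ε_r²))`,
using `ε r = ε_r`. -/


open MeasureTheory ProbabilityTheory

/-- The ℓ¹ norm on ℝ². -/
def srL1 (q : ℝ × ℝ) : ℝ := |q.1| + |q.2|

/-- The Euclidean (ℓ²) norm on ℝ². -/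
noncomputable def srL2 (q : ℝ × ℝ) : ℝ := Real.sqrt (q.1 ^ 2 + q.2 ^ 2)

/-- `f(q, εr) = ‖q‖₁² εr²/2 + ‖q‖₁³ εr³/6`. -/
noncomputable def srF (q : ℝ × ℝ) (εr : ℝ) : ℝ :=
  srL1 q ^ 2 * εr ^ 2 / 2 + srL1 q ^ 3 * εr ^ 3 / 6

/-- The centered fluctuation term
`B_G = (1/(r² n_d)) Σ_d Σ_j (exp(i q·b_{dj}) − E[exp(i q·b_{dj})])`. -/
noncomputable def srBG {Ω : Type*} [MeasureSpace Ω] (r nd : ℕ)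
    (b : Fin r × Fin r → Fin nd → Ω → ℝ × ℝ) (q : ℝ × ℝ) (ω : Ω) : ℂ :=
  ((r : ℂ) ^ 2 * (nd : ℂ))⁻¹ * ∑ d : Fin r × Fin r, ∑ j : Fin nd,
    (Complex.exp (Complex.I * ((q.1 * (b d j ω).1 + q.2 * (b d j ω).2 : ℝ) : ℂ))
      - ∫ ω', Complex.exp (Complex.I * ((q.1 * (b d j ω').1 + q.2 * (b d j ω').2 : ℝ) : ℂ)))

/-- The coefficient `G_α(k') = (1/(r² n_d)) Σ_d Σ_j exp(−i θ_{αd}) exp(i q_α·b_{dj})`,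
parametrized by `δ = α − γ` (so that `θ_{αd} = (2π/r) δ·d`) and `q = q_α`. -/
noncomputable def srG {Ω : Type*} (r nd : ℕ)
    (b : Fin r × Fin r → Fin nd → Ω → ℝ × ℝ) (δ : ℤ × ℤ) (q : ℝ × ℝ) (ω : Ω) : ℂ :=
  ((r : ℂ) ^ 2 * (nd : ℂ))⁻¹ * ∑ d : Fin r × Fin r, ∑ j : Fin nd,
    Complex.exp (-Complex.I *
        ((2 * Real.pi / (r : ℝ) *
          ((δ.1 * ((d.1 : ℕ) : ℤ) + δ.2 * ((d.2 : ℕ) : ℤ) : ℤ) : ℝ) : ℝ) : ℂ))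
      * Complex.exp (Complex.I * ((q.1 * (b d j ω).1 + q.2 * (b d j ω).2 : ℝ) : ℂ))

open Real NNReal

namespace ProbabilityTheory

variable {Ω : Type*} {mΩ : MeasurableSpace Ω} {μ : Measure Ω}

lemma HasSubgaussianMGF.measureReal_abs_ge_le [IsFiniteMeasure μ] {X : Ω → ℝ} {c : ℝ≥0}
    (h : HasSubgaussianMGF X c μ) {t : ℝ} (ht : 0 ≤ t) :
    μ.real {ω | t ≤ |X ω|} ≤ 2 * exp (-t ^ 2 / (2 * c)) := by
  have hsub : {ω | t ≤ |X ω|} ⊆ {ω | t ≤ X ω} ∪ {ω | t ≤ (-X) ω} :=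
    fun ω (hω : t ≤ |X ω|) => le_abs.mp hω
  calc μ.real {ω | t ≤ |X ω|}
      ≤ μ.real {ω | t ≤ X ω} + μ.real {ω | t ≤ (-X) ω} :=
        (measureReal_mono hsub).trans (measureReal_union_le _ _)
    _ ≤ exp (-t ^ 2 / (2 * c)) + exp (-t ^ 2 / (2 * c)) :=
        add_le_add (h.measure_ge_le ht) (h.neg.measure_ge_le ht)
    _ = 2 * exp (-t ^ 2 / (2 * c)) := by ring

lemma measureReal_abs_sum_sub_integral_ge_le_of_mem_Icc [IsProbabilityMeasure μ]
    {ι : Type*} [Fintype ι] {X : ι → Ω → ℝ} (hindep : iIndepFun X μ)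
    (hmeas : ∀ i, AEMeasurable (X i) μ) {a b : ℝ} (hab : ∀ i, ∀ᵐ ω ∂μ, X i ω ∈ Set.Icc a b)
    {t : ℝ} (ht : 0 ≤ t) :
    μ.real {ω | t ≤ |∑ i, (X i ω - μ[X i])|}
      ≤ 2 * exp (-t ^ 2 / (2 * Fintype.card ι * ((b - a) / 2) ^ 2)) := by
  have hcentered : iIndepFun (fun i => (· - μ[X i]) ∘ X i) μ :=
    hindep.comp _ fun i => by fun_prop
  have hsum := HasSubgaussianMGF.sum_of_iIndepFun hcentered (s := Finset.univ)
    fun i _ => hasSubgaussianMGF_of_mem_Icc (hmeas i) (hab i)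
  refine (hsum.measureReal_abs_ge_le ht).trans_eq ?_
  rw [Finset.sum_const, Finset.card_univ, nsmul_eq_mul]
  push_cast
  rw [Real.norm_eq_abs, div_pow, sq_abs, div_pow, mul_assoc]

end ProbabilityTheory

lemma srL1_pos {q : ℝ × ℝ} (hq : q ≠ 0) : 0 < srL1 q := by
  have : q.1 ≠ 0 ∨ q.2 ≠ 0 := by contrapose! hq; exact Prod.ext hq.1 hq.2
  rcases this with h | h <;> unfold srL1 <;> positivity

lemma abs_fst_mul_add_snd_mul_le_srL1_mul {q v : ℝ × ℝ} {R : ℝ}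
    (h₁ : |v.1| ≤ R) (h₂ : |v.2| ≤ R) :
    |q.1 * v.1 + q.2 * v.2| ≤ srL1 q * R :=
  calc |q.1 * v.1 + q.2 * v.2| ≤ |q.1| * |v.1| + |q.2| * |v.2| := by
        simpa only [abs_mul] using abs_add_le (q.1 * v.1) (q.2 * v.2)
    _ ≤ |q.1| * R + |q.2| * R := by gcongr
    _ = srL1 q * R := by rw [srL1, add_mul]

lemma Real.cos_mem_Icc_of_abs_le {x R : ℝ} (h : |x| ≤ R) :
    cos x ∈ Set.Icc (1 - R ^ 2 / 2) 1 := by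
  have : x ^ 2 ≤ R ^ 2 := sq_abs x ▸ pow_le_pow_left₀ (abs_nonneg x) h 2
  exact ⟨by linarith [one_sub_sq_div_two_le_cos (x := x)], cos_le_one x⟩

lemma srBG_re {Ω : Type*} [MeasureSpace Ω] [IsFiniteMeasure (ℙ : Measure Ω)] (r nd : ℕ)
    (b : Fin r × Fin r → Fin nd → Ω → ℝ × ℝ) (hb : ∀ d j, Measurable (b d j)) (q : ℝ × ℝ)
    (ω : Ω) :
    (srBG r nd b q ω).re = ((r : ℝ) ^ 2 * nd)⁻¹ * ∑ d, ∑ j,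
      (cos (q.1 * (b d j ω).1 + q.2 * (b d j ω).2)
        - ∫ ω', cos (q.1 * (b d j ω').1 + q.2 * (b d j ω').2)) := by
  have hre (x : ℝ) : (Complex.exp (Complex.I * x)).re = cos x := by
    rw [mul_comm]; exact Complex.exp_ofReal_mul_I_re x
  have hint (d j) : Integrable (fun ω' =>
      Complex.exp (Complex.I * ((q.1 * (b d j ω').1 + q.2 * (b d j ω').2 : ℝ) : ℂ))) := by
    refine Integrable.of_bound (C := 1) (by fun_prop) (ae_of_all _ fun ω' => ?_)
    rw [Complex.norm_exp]; simp
  have hcoef : ((r : ℂ) ^ 2 * (nd : ℂ))⁻¹ = ((((r : ℝ) ^ 2 * nd)⁻¹ : ℝ) : ℂ) := by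
    push_cast; ring
  rw [srBG, hcoef, Complex.re_ofReal_mul]
  simp only [Complex.re_sum, Complex.sub_re, hre]
  congr! with d - j -
  rw [← RCLike.re_to_complex, ← integral_re (hint d j)]
  simp only [RCLike.re_to_complex, hre]

lemma measureReal_abs_srBG_re_ge_le {Ω : Type*} [MeasureSpace Ω]
    [IsProbabilityMeasure (ℙ : Measure Ω)] {r nd : ℕ} (hr : 0 < r) (hnd : 0 < nd)
    {b : Fin r × Fin r → Fin nd → Ω → ℝ × ℝ} (hbmeas : ∀ d j, Measurable (b d j)) {R : ℝ}
    (hbdd : ∀ d j ω, |(b d j ω).1| ≤ R ∧ |(b d j ω).2| ≤ R)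
    (hindep : iIndepFun (fun p : (Fin r × Fin r) × Fin nd => b p.1 p.2) ℙ) (q : ℝ × ℝ)
    {t : ℝ} (ht : 0 ≤ t) :
    (ℙ : Measure Ω).real {ω | t ≤ |(srBG r nd b q ω).re|}
      ≤ 2 * exp (-(8 * r ^ 2 * nd * t ^ 2) / (srL1 q * R) ^ 4) := by
  have ha : 0 < (r : ℝ) ^ 2 * nd := by positivity
  set a : ℝ := (r : ℝ) ^ 2 * nd
  set Y : (Fin r × Fin r) × Fin nd → Ω → ℝ := fun p ω =>
    cos (q.1 * (b p.1 p.2 ω).1 + q.2 * (b p.1 p.2 ω).2)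
  have hYindep : iIndepFun Y ℙ :=
    hindep.comp (fun _ v => cos (q.1 * v.1 + q.2 * v.2)) fun _ => by fun_prop
  have hYmeas (p) : AEMeasurable (Y p) := by have := hbmeas p.1 p.2; fun_prop
  have hY (p) : ∀ᵐ ω, Y p ω ∈ Set.Icc (1 - (srL1 q * R) ^ 2 / 2) 1 := ae_of_all _ fun ω =>
    cos_mem_Icc_of_abs_le <|
      abs_fst_mul_add_snd_mul_le_srL1_mul (hbdd p.1 p.2 ω).1 (hbdd p.1 p.2 ω).2
  have hevent : {ω | t ≤ |(srBG r nd b q ω).re|}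
      = {ω | a * t ≤ |∑ p, (Y p ω - ∫ ω', Y p ω')|} := by
    ext ω
    rw [Set.mem_ofPred, Set.mem_ofPred, srBG_re r nd b hbmeas, ← Fintype.sum_prod_type', abs_mul,
      abs_of_pos (inv_pos.2 ha), le_inv_mul_iff₀ ha]
  have hcard : (Fintype.card ((Fin r × Fin r) × Fin nd) : ℝ) = a := by
    simp only [Fintype.card_prod, Fintype.card_fin, a]; push_cast; ring
  rw [hevent]
  refine (measureReal_abs_sum_sub_integral_ge_le_of_mem_Icc hYindep hYmeas hY
    (by positivity)).trans_eq ?_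
  rw [hcard, sub_sub_cancel]
  congr 2
  rcases eq_or_ne (srL1 q * R) 0 with h | h
  · simp [h]
  · simp only [a]; field_simp; ring

theorem stmt_4_general
    {Ω : Type*} [MeasureSpace Ω] [IsProbabilityMeasure (ℙ : Measure Ω)]
    (r nd : ℕ) (hr : 2 ≤ r) (hnd : 1 ≤ nd)
    (ε εr : ℝ) (hε : 0 < ε) (hεr : εr = ε * r)
    (b : Fin r × Fin r → Fin nd → Ω → ℝ × ℝ)
    (hbmeas : ∀ d j, Measurable (b d j))
    (hbdd : ∀ d j ω, |(b d j ω).1| ≤ εr ∧ |(b d j ω).2| ≤ εr)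
    (hindep : iIndepFun
      (fun p : (Fin r × Fin r) × Fin nd => b p.1 p.2) ℙ)
    (qγ : ℝ × ℝ)
    (hq0 : qγ ≠ 0) (c : ℝ) (hc : 0 < c) :
    (ℙ {ω | c * srL1 qγ * ε + srL1 qγ ^ 4 * εr ^ 4 / 12 ≤ |(srBG r nd b qγ ω).re|}).toReal
      ≤ 2 * Real.exp (-(c ^ 2 * nd) / (2 * srL1 qγ ^ 2 * εr ^ 2)) := by
  set L := srL1 qγ
  have hL : 0 < L := srL1_pos hq0
  have hexp : -(8 * r ^ 2 * nd * (c * L * ε) ^ 2) / (L * εr) ^ 4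
      = 16 * (-(c ^ 2 * nd) / (2 * L ^ 2 * εr ^ 2)) := by
    subst hεr; field_simp; ring
  calc (ℙ {ω | c * L * ε + L ^ 4 * εr ^ 4 / 12 ≤ |(srBG r nd b qγ ω).re|}).toReal
      ≤ (ℙ : Measure Ω).real {ω | c * L * ε ≤ |(srBG r nd b qγ ω).re|} :=
        measureReal_mono <| Set.ofPred_subset_ofPred.2 fun ω hω =>
          le_of_add_le_of_nonneg_left hω (by positivity)
    _ ≤ 2 * exp (-(8 * r ^ 2 * nd * (c * L * ε) ^ 2) / (L * εr) ^ 4) :=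
        measureReal_abs_srBG_re_ge_le (by omega) (by omega) hbmeas hbdd hindep qγ (by positivity)
    _ ≤ 2 * Real.exp (-(c ^ 2 * nd) / (2 * L ^ 2 * εr ^ 2)) := by
        rw [hexp]
        gcongr
        linarith [show 0 ≤ c ^ 2 * nd / (2 * L ^ 2 * εr ^ 2) by positivity,
          neg_div (2 * L ^ 2 * εr ^ 2) (c ^ 2 * nd)]

/-- Concentration inequality (22) for the real part of `B_G`. -/
theorem stmt_4
    {Ω : Type*} [MeasureSpace Ω] [IsProbabilityMeasure (ℙ : Measure Ω)]
    (r N nd : ℕ) (hr : 2 ≤ r) (hN : 1 ≤ N) (hnd : 1 ≤ nd)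
    (ε εr : ℝ) (hε : 0 < ε) (hεr : εr = ε * r)
    (b : Fin r × Fin r → Fin nd → Ω → ℝ × ℝ)
    (hbmeas : ∀ d j, Measurable (b d j))
    (hbdd : ∀ d j ω, |(b d j ω).1| ≤ εr ∧ |(b d j ω).2| ≤ εr)
    (hindep : iIndepFun
      (fun p : (Fin r × Fin r) × Fin nd => b p.1 p.2) ℙ)
    (k' k γ : ℤ × ℤ)
    (hk'γ : k' = (k.1 + γ.1 * N, k.2 + γ.2 * N))
    (hk'HR : -(r * N : ℤ) ≤ 2 * k'.1 ∧ 2 * k'.1 < r * N ∧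
             -(r * N : ℤ) ≤ 2 * k'.2 ∧ 2 * k'.2 < r * N)
    (hkLR : -(N : ℤ) ≤ 2 * k.1 ∧ 2 * k.1 < N ∧ -(N : ℤ) ≤ 2 * k.2 ∧ 2 * k.2 < N)
    (qγ : ℝ × ℝ)
    (hqγ : qγ = (2 * Real.pi * (k'.1 : ℝ) / ((r : ℝ) * N),
                 2 * Real.pi * (k'.2 : ℝ) / ((r : ℝ) * N)))
    (hq0 : qγ ≠ 0) (c : ℝ) (hc : 0 < c) :
    (ℙ {ω | c * srL1 qγ * ε + srL1 qγ ^ 4 * εr ^ 4 / 12 ≤ |(srBG r nd b qγ ω).re|}).toReal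
      ≤ 2 * Real.exp (-(c ^ 2 * nd) / (2 * srL1 qγ ^ 2 * εr ^ 2)) :=
  stmt_4_general r nd hr hnd ε εr hε hεr b hbmeas hbdd hindep qγ hq0 c hc
end

section
/- With the setup below, let α ∈ ℤ² with k + αN ∈ D_HR and α ≠ γ, and suppose each component of α − γ is congruent to 0 or r/2 modulo r. Then, pointwise on the probability space (i.e., surely), |Re(G_α(k'))| ≤ ‖q_α‖₁² ε_r² / 2. -/
open MeasureTheory ProbabilityTheory

/-!
Because `k + αN` and `k + γN` both lie in `D_HR`, each component of `α − γ` has absolute value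
less than `r`; the congruence hypothesis then gives `2(α − γ) = c r` with some component of `c`
odd, which forces `r` to be even. So every phase `exp(−i θ_{αd})` is the real sign
`(−1)^(c·d)`, and these signs sum to zero over `d ∈ {0,…,r−1}²`. This lets one replace
`cos(q_α·b_{dj})` by `cos(q_α·b_{dj}) − 1` in `Re G_α`, and `|1 − cos x| ≤ x²/2` with
`|q_α·b_{dj}| ≤ ‖q_α‖₁ ε_r` finishes the estimate.
-/

theorem Real.abs_sum_mul_cos_le_of_sum_eq_zero {ι : Type*} [Fintype ι] (s x : ι → ℝ) {M : ℝ}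
    (hs : ∀ i, |s i| ≤ 1) (hsum : ∑ i, s i = 0) (hx : ∀ i, |x i| ≤ M) :
    |∑ i, s i * Real.cos (x i)| ≤ Fintype.card ι * (M ^ 2 / 2) := by
  have hcentered : ∑ i, s i * Real.cos (x i) = ∑ i, s i * (Real.cos (x i) - 1) := by
    simp only [mul_sub, mul_one, Finset.sum_sub_distrib, hsum, sub_zero]
  have hterm : ∀ i, |s i * (Real.cos (x i) - 1)| ≤ M ^ 2 / 2 := by
    intro i
    have hcos : 0 ≤ 1 - Real.cos (x i) := sub_nonneg.mpr (Real.cos_le_one _)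
    have hsq : x i ^ 2 ≤ M ^ 2 := sq_le_sq' (abs_le.mp (hx i)).1 (abs_le.mp (hx i)).2
    calc |s i * (Real.cos (x i) - 1)| = |s i| * (1 - Real.cos (x i)) := by
          rw [abs_mul, abs_sub_comm, abs_of_nonneg hcos]
      _ ≤ 1 * (x i ^ 2 / 2) :=
          mul_le_mul (hs i) (by linarith [Real.one_sub_sq_div_two_le_cos (x := x i)]) hcos
            zero_le_one
      _ ≤ M ^ 2 / 2 := by linarith
  calc |∑ i, s i * Real.cos (x i)| ≤ ∑ i, |s i * (Real.cos (x i) - 1)| :=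
        hcentered ▸ Finset.abs_sum_le_sum_abs _ _
    _ ≤ ∑ _i : ι, M ^ 2 / 2 := Finset.sum_le_sum fun i _ => hterm i
    _ = Fintype.card ι * (M ^ 2 / 2) := by simp

theorem sum_fin_neg_one_zpow_mul_eq_zero {r : ℕ} (hr : Even r) {c : ℤ} (hc : Odd c) :
    ∑ d : Fin r, (-1 : ℝ) ^ (c * ((d : ℕ) : ℤ)) = 0 := by
  simp_rw [zpow_mul, hc.neg_one_zpow, zpow_natCast]
  rw [Fin.sum_univ_eq_sum_range (fun i => (-1 : ℝ) ^ i), neg_one_geom_sum, if_pos hr]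

theorem sum_fin_prod_neg_one_zpow_eq_zero {r : ℕ} (hr : Even r) {c₁ c₂ : ℤ}
    (hc : Odd c₁ ∨ Odd c₂) :
    ∑ d : Fin r × Fin r, (-1 : ℝ) ^ (c₁ * ((d.1 : ℕ) : ℤ) + c₂ * ((d.2 : ℕ) : ℤ)) = 0 := by
  simp only [zpow_add₀ (by norm_num : (-1 : ℝ) ≠ 0), Fintype.sum_prod_type,
    ← Finset.sum_mul_sum]
  rcases hc with hc | hc <;> simp [sum_fin_neg_one_zpow_mul_eq_zero hr hc]

theorem Complex.exp_neg_I_mul_two_pi_div_mul {r : ℕ} (hr : r ≠ 0) {n m : ℤ}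
    (h : 2 * n = m * r) :
    Complex.exp (-Complex.I * ((2 * Real.pi / (r : ℝ) * (n : ℝ) : ℝ) : ℂ)) =
      (((-1 : ℝ) ^ m : ℝ) : ℂ) := by
  have hR : (2 * n : ℝ) = m * r := by exact_mod_cast h
  have harg : 2 * Real.pi / (r : ℝ) * n = Real.pi * m := by
    rw [div_mul_eq_mul_div, div_eq_iff (Nat.cast_ne_zero.mpr hr)]
    linear_combination Real.pi * hR
  have hI : -Complex.I * ((Real.pi * m : ℝ) : ℂ) = m * (-(Real.pi * Complex.I)) := by
    push_cast
    ring
  rw [harg, hI, Complex.exp_int_mul, Complex.exp_neg, Complex.exp_pi_mul_I]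
  push_cast
  norm_num

theorem abs_dot_le_srL1_mul (q v : ℝ × ℝ) {e : ℝ} (h₁ : |v.1| ≤ e) (h₂ : |v.2| ≤ e) :
    |q.1 * v.1 + q.2 * v.2| ≤ srL1 q * e :=
  calc |q.1 * v.1 + q.2 * v.2| ≤ |q.1| * |v.1| + |q.2| * |v.2| := by
        rw [← abs_mul, ← abs_mul]
        exact abs_add_le _ _
    _ ≤ |q.1| * e + |q.2| * e := by gcongr
    _ = srL1 q * e := by
        rw [srL1]
        ring

theorem abs_re_srG_le {Ω : Type*} {r nd : ℕ} (b : Fin r × Fin r → Fin nd → Ω → ℝ × ℝ)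
    (δ : ℤ × ℤ) (q : ℝ × ℝ) (ω : Ω) {εr : ℝ}
    (hbdd : ∀ d j, |(b d j ω).1| ≤ εr ∧ |(b d j ω).2| ≤ εr)
    (s : Fin r × Fin r → ℝ) (hs : ∀ d, |s d| ≤ 1) (hsum : ∑ d, s d = 0)
    (hphase : ∀ d : Fin r × Fin r, Complex.exp (-Complex.I *
        ((2 * Real.pi / (r : ℝ) *
          ((δ.1 * ((d.1 : ℕ) : ℤ) + δ.2 * ((d.2 : ℕ) : ℤ) : ℤ) : ℝ) : ℝ) : ℂ)) = s d) :
    |(srG r nd b δ q ω).re| ≤ srL1 q ^ 2 * εr ^ 2 / 2 := by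
  set x : (Fin r × Fin r) × Fin nd → ℝ :=
    fun p => q.1 * (b p.1 p.2 ω).1 + q.2 * (b p.1 p.2 ω).2
  set c : ℝ := (r : ℝ) ^ 2 * nd
  have hre : (srG r nd b δ q ω).re = c⁻¹ * ∑ p, s p.1 * Real.cos (x p) := by
    have hc : ((r : ℂ) ^ 2 * (nd : ℂ))⁻¹ = ((c⁻¹ : ℝ) : ℂ) := by
      push_cast [c]
      rfl
    rw [srG, hc, Complex.re_ofReal_mul, Complex.re_sum]
    conv_rhs => rw [Fintype.sum_prod_type]
    refine congrArg _ (Finset.sum_congr rfl fun d _ => ?_)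
    rw [Complex.re_sum]
    refine Finset.sum_congr rfl fun j _ => ?_
    rw [hphase d, Complex.re_ofReal_mul, mul_comm Complex.I, Complex.exp_ofReal_mul_I_re]
  have hsum' : ∑ p : (Fin r × Fin r) × Fin nd, s p.1 = 0 := by
    simp [Fintype.sum_prod_type_right, hsum]
  have hbound := Real.abs_sum_mul_cos_le_of_sum_eq_zero (fun p => s p.1) x (fun p => hs p.1)
    hsum' fun p => abs_dot_le_srL1_mul q _ (hbdd p.1 p.2).1 (hbdd p.1 p.2).2
  have hcard : (Fintype.card ((Fin r × Fin r) × Fin nd) : ℝ) = c := by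
    simp [c, sq]
  rw [hcard, mul_pow] at hbound
  have hc0 : 0 ≤ c := by positivity
  have hK : 0 ≤ srL1 q ^ 2 * εr ^ 2 / 2 := by positivity
  rw [hre, abs_mul, abs_of_nonneg (inv_nonneg.mpr hc0)]
  calc c⁻¹ * |∑ p, s p.1 * Real.cos (x p)| ≤ c⁻¹ * (c * (srL1 q ^ 2 * εr ^ 2 / 2)) :=
        mul_le_mul_of_nonneg_left hbound (inv_nonneg.mpr hc0)
    _ ≤ srL1 q ^ 2 * εr ^ 2 / 2 := by
        rcases hc0.eq_or_lt with h | h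
        · simp [← h, hK]
        · rw [inv_mul_cancel_left₀ h.ne']

theorem abs_sub_lt_of_two_mul_add_mul_bounds {r N : ℕ} {k a a' : ℤ}
    (ha : -(r * N : ℤ) ≤ 2 * (k + a * N) ∧ 2 * (k + a * N) < r * N)
    (ha' : -(r * N : ℤ) ≤ 2 * (k + a' * N) ∧ 2 * (k + a' * N) < r * N) :
    |a - a'| < r := by
  have hN : 0 < (N : ℤ) := by
    rcases Nat.eq_zero_or_pos N with h | h
    · subst h
      omega
    · exact_mod_cast h
  refine abs_lt.mpr ⟨lt_of_mul_lt_mul_right ?_ hN.le, lt_of_mul_lt_mul_right ?_ hN.le⟩ <;>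
    linarith

theorem exists_two_mul_eq_mul_of_abs_lt {r : ℕ} {z : ℤ} (hz : |z| < r)
    (h : (r : ℤ) ∣ z ∨ ∃ m : ℤ, 2 * z = (2 * m + 1) * r) :
    ∃ c : ℤ, 2 * z = c * r ∧ (z ≠ 0 → Odd c) := by
  rcases h with h | ⟨m, hm⟩
  · have hz0 := Int.eq_zero_of_abs_lt_dvd h hz
    exact ⟨0, by simp [hz0], fun h0 => absurd hz0 h0⟩
  · exact ⟨2 * m + 1, hm, fun _ => odd_two_mul_add_one m⟩

theorem even_of_two_mul_eq_mul {r : ℕ} {z c : ℤ} (h : 2 * z = c * r) (hc : Odd c) : Even r := by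
  have hcr : Even (c * r) := ⟨z, by rw [← h, two_mul]⟩
  exact Int.even_coe_nat r |>.mp
    ((Int.even_mul.mp hcr).resolve_left (Int.not_even_iff_odd.mpr hc))

theorem stmt_9_general
    {Ω : Type*}
    (r N nd : ℕ)
    (εr : ℝ)
    (b : Fin r × Fin r → Fin nd → Ω → ℝ × ℝ)
    (hbdd : ∀ d j ω, |(b d j ω).1| ≤ εr ∧ |(b d j ω).2| ≤ εr)
    (k' k γ : ℤ × ℤ)
    (hk'γ : k' = (k.1 + γ.1 * N, k.2 + γ.2 * N))
    (hk'HR : -(r * N : ℤ) ≤ 2 * k'.1 ∧ 2 * k'.1 < r * N ∧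
             -(r * N : ℤ) ≤ 2 * k'.2 ∧ 2 * k'.2 < r * N)
    (qf : ℤ × ℤ → ℝ × ℝ)
    (α : ℤ × ℤ)
    (hαHR : -(r * N : ℤ) ≤ 2 * (k.1 + α.1 * N) ∧ 2 * (k.1 + α.1 * N) < r * N ∧
             -(r * N : ℤ) ≤ 2 * (k.2 + α.2 * N) ∧ 2 * (k.2 + α.2 * N) < r * N)
    (hαγ : α ≠ γ)
    (hcong : ((((r : ℤ) ∣ (α - γ).1) ∨ ∃ m : ℤ, 2 * (α - γ).1 = (2 * m + 1) * r) ∧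
      (((r : ℤ) ∣ (α - γ).2) ∨ ∃ m : ℤ, 2 * (α - γ).2 = (2 * m + 1) * r))) :
    ∀ ω, |(srG r nd b (α - γ) (qf α) ω).re| ≤ srL1 (qf α) ^ 2 * εr ^ 2 / 2 := by
  intro ω
  subst hk'γ
  have hlt₁ : |(α - γ).1| < r :=
    abs_sub_lt_of_two_mul_add_mul_bounds ⟨hαHR.1, hαHR.2.1⟩ ⟨hk'HR.1, hk'HR.2.1⟩
  have hlt₂ : |(α - γ).2| < r :=
    abs_sub_lt_of_two_mul_add_mul_bounds ⟨hαHR.2.2.1, hαHR.2.2.2⟩ ⟨hk'HR.2.2.1, hk'HR.2.2.2⟩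
  obtain ⟨c₁, hc₁, hodd₁⟩ := exists_two_mul_eq_mul_of_abs_lt hlt₁ hcong.1
  obtain ⟨c₂, hc₂, hodd₂⟩ := exists_two_mul_eq_mul_of_abs_lt hlt₂ hcong.2
  have hodd : Odd c₁ ∨ Odd c₂ := by
    by_contra! h
    refine hαγ (sub_eq_zero.mp (Prod.ext ?_ ?_))
    · exact not_not.mp (mt hodd₁ h.1)
    · exact not_not.mp (mt hodd₂ h.2)
  have hr : Even r := hodd.elim (even_of_two_mul_eq_mul hc₁) (even_of_two_mul_eq_mul hc₂)
  have hr0 : r ≠ 0 := by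
    have := (abs_nonneg _).trans_lt hlt₁
    omega
  refine abs_re_srG_le b (α - γ) (qf α) ω (hbdd · · ω) _ (fun d => (abs_neg_one_zpow _).le)
    (sum_fin_prod_neg_one_zpow_eq_zero hr hodd) fun d => ?_
  exact Complex.exp_neg_I_mul_two_pi_div_mul hr0
    (by linear_combination ((d.1 : ℕ) : ℤ) * hc₁ + ((d.2 : ℕ) : ℤ) * hc₂)

/-- Deterministic bound (38): when every component of `α − γ` is congruent to `0` or `r/2`
modulo `r`, `|Re(G_α(k'))| ≤ ‖q_α‖₁² εr² / 2` surely. -/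
theorem stmt_9
    {Ω : Type*} [MeasureSpace Ω] [IsProbabilityMeasure (ℙ : Measure Ω)]
    (r N nd : ℕ) (hr : 2 ≤ r) (hN : 1 ≤ N) (hnd : 1 ≤ nd)
    (ε εr : ℝ) (hε : 0 < ε) (hεr : εr = ε * r)
    (b : Fin r × Fin r → Fin nd → Ω → ℝ × ℝ)
    (hbmeas : ∀ d j, Measurable (b d j))
    (hbdd : ∀ d j ω, |(b d j ω).1| ≤ εr ∧ |(b d j ω).2| ≤ εr)
    (k' k γ : ℤ × ℤ)
    (hk'γ : k' = (k.1 + γ.1 * N, k.2 + γ.2 * N))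
    (hk'HR : -(r * N : ℤ) ≤ 2 * k'.1 ∧ 2 * k'.1 < r * N ∧
             -(r * N : ℤ) ≤ 2 * k'.2 ∧ 2 * k'.2 < r * N)
    (hkLR : -(N : ℤ) ≤ 2 * k.1 ∧ 2 * k.1 < N ∧ -(N : ℤ) ≤ 2 * k.2 ∧ 2 * k.2 < N)
    (qf : ℤ × ℤ → ℝ × ℝ)
    (hqf : ∀ α : ℤ × ℤ, qf α = (2 * Real.pi * ((k.1 + α.1 * N : ℤ) : ℝ) / ((r : ℝ) * N),
                                2 * Real.pi * ((k.2 + α.2 * N : ℤ) : ℝ) / ((r : ℝ) * N)))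
    (α : ℤ × ℤ)
    (hαHR : -(r * N : ℤ) ≤ 2 * (k.1 + α.1 * N) ∧ 2 * (k.1 + α.1 * N) < r * N ∧
             -(r * N : ℤ) ≤ 2 * (k.2 + α.2 * N) ∧ 2 * (k.2 + α.2 * N) < r * N)
    (hαγ : α ≠ γ)
    (hcong : ((((r : ℤ) ∣ (α - γ).1) ∨ ∃ m : ℤ, 2 * (α - γ).1 = (2 * m + 1) * r) ∧
      (((r : ℤ) ∣ (α - γ).2) ∨ ∃ m : ℤ, 2 * (α - γ).2 = (2 * m + 1) * r))) :
    ∀ ω, |(srG r nd b (α - γ) (qf α) ω).re| ≤ srL1 (qf α) ^ 2 * εr ^ 2 / 2 :=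
  stmt_9_general r N nd εr b hbdd k' k γ hk'γ hk'HR qf α hαHR hαγ hcong
end

section
/- (Theorem 1, aliasing part, per frequency.) With the setup below, let A = { α ∈ ℤ² : k + αN ∈ D_HR, α ≠ γ }, let Z_γ ∈ ℂ be nonzero and (Z_α)_{α∈A} be complex numbers, and let p₂, P₂ ∈ (0,1). Assume: (i) the b_{dj} are identically distributed; (ii) the family (G_α(k'))_{α∈A} is mutually independent; (iii) for every α ∈ A and c > 0, P( |G_α(k')| ≥ √2 ( c‖q_α‖₁ ε + f(q_α, ε_r) ) ) ≤ 4 exp(−c² n_d), where f(q, ε_r) = ‖q‖₁² ε_r²/2 + ‖q‖₁³ ε_r³/6; (iv) there exists c₂ > 0 with √2 Σ_{α∈A} |Z_α/Z_γ| ( c₂‖q_α‖₁ ε + f(q_α, ε_r) ) ≤ p₂. If n_d ≥ (1/c₂²) · log( 4 / (1 − P₂^{1/(r²−1)}) ), then P( |Σ_{α∈A} Z_α G_α(k')| ≤ p₂ |Z_γ| ) ≥ P₂. -/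
open MeasureTheory ProbabilityTheory

/-! If every `G_α` stays below `t_α = √2 (c₂‖q_α‖₁ε + f(q_α, ε_r))`, the triangle inequality and
the hypothesis on `c₂` bound the aliasing sum by `p₂ |Z_γ|`. By independence this event has
probability the product of the individual ones, each at least `1 − 4 e^{−c₂² n_d} ≥ P₂^{1/(r²−1)}`
by the choice of `n_d`; and there are at most `r² − 1` aliases, since each coordinate of `α`
ranges over at most `r` consecutive integers and `α ≠ γ`. -/

lemma Int.exists_Ico_of_mul_mem_Ico {m a : ℤ} (hm : 0 ≤ m) (r : ℕ) :
    ∃ L : ℤ, ∀ α : ℤ, a ≤ m * α → m * α < a + r * m → α ∈ Finset.Ico L (L + r) := by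
  rcases hm.eq_or_lt with rfl | hm
  · exact ⟨0, fun α h₁ h₂ => by linarith⟩
  -- `-((-a) / m) = ⌈a / m⌉`, since `Int.ediv` rounds down for `m > 0`
  refine ⟨-((-a) / m), fun α h₁ h₂ => Finset.mem_Ico.2 ⟨?_, ?_⟩⟩
  · have := Int.lt_mul_ediv_self_add (x := -a) hm
    nlinarith
  · have := Int.mul_ediv_self_le (x := -a) hm.ne'
    nlinarith

/-- `k + α N ∈ D_HR`. -/
def InHRGrid (r N : ℕ) (k α : ℤ × ℤ) : Prop :=
  -(r * N : ℤ) ≤ 2 * (k.1 + α.1 * N) ∧ 2 * (k.1 + α.1 * N) < r * N ∧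
    -(r * N : ℤ) ≤ 2 * (k.2 + α.2 * N) ∧ 2 * (k.2 + α.2 * N) < r * N

lemma exists_Ico_of_inHRGrid_coord (r N : ℕ) (k : ℤ) :
    ∃ L : ℤ, ∀ α : ℤ, -(r * N : ℤ) ≤ 2 * (k + α * N) → 2 * (k + α * N) < r * N →
      α ∈ Finset.Ico L (L + r) := by
  obtain ⟨L, hL⟩ := Int.exists_Ico_of_mul_mem_Ico (m := 2 * N) (a := -(r * N) - 2 * k)
    (by positivity) r
  exact ⟨L, fun α h₁ h₂ => hL α (by linarith) (by linarith)⟩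

lemma card_le_of_forall_inHRGrid_ne {r N : ℕ} {k γ : ℤ × ℤ} {A : Finset (ℤ × ℤ)}
    (hγ : InHRGrid r N k γ) (hA : ∀ α ∈ A, InHRGrid r N k α ∧ α ≠ γ) :
    A.card ≤ r * r - 1 := by
  obtain ⟨L₁, hL₁⟩ := exists_Ico_of_inHRGrid_coord r N k.1
  obtain ⟨L₂, hL₂⟩ := exists_Ico_of_inHRGrid_coord r N k.2
  set box := Finset.Ico L₁ (L₁ + r) ×ˢ Finset.Ico L₂ (L₂ + r)
  have mem_box : ∀ α, InHRGrid r N k α → α ∈ box := fun α ⟨h₁, h₂, h₃, h₄⟩ =>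
    Finset.mem_product.2 ⟨hL₁ α.1 h₁ h₂, hL₂ α.2 h₃ h₄⟩
  calc A.card ≤ (box.erase γ).card := Finset.card_le_card fun α hα =>
        Finset.mem_erase.2 ⟨(hA α hα).2, mem_box α (hA α hα).1⟩
    _ = r * r - 1 := by
      rw [Finset.card_erase_of_mem (mem_box γ hγ), Finset.card_product, Int.card_Ico,
        Int.card_Ico, add_sub_cancel_left, add_sub_cancel_left, Int.toNat_natCast]

lemma one_sub_measureReal_compl_le {Ω : Type*} [MeasurableSpace Ω] (μ : Measure Ω)
    [IsProbabilityMeasure μ] (s : Set Ω) : 1 - μ.real sᶜ ≤ μ.real s := by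
  have := measureReal_union_le (μ := μ) s sᶜ
  rw [Set.union_compl_self, probReal_univ] at this
  linarith

lemma ProbabilityTheory.iIndepFun.pow_card_le_measureReal_iInter_preimage {Ω ι β : Type*}
    [MeasurableSpace Ω] {μ : Measure Ω} [IsProbabilityMeasure μ] [Fintype ι] [MeasurableSpace β]
    {X : ι → Ω → β} (hX : iIndepFun X μ) {s : ι → Set β} (hs : ∀ i, MeasurableSet (s i))
    {x : ℝ} (hx : 0 ≤ x) (htail : ∀ i, μ.real (X i ⁻¹' (s i)ᶜ) ≤ 1 - x) :
    x ^ Fintype.card ι ≤ μ.real (⋂ i, X i ⁻¹' s i) := by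
  have hprod : μ (⋂ i, X i ⁻¹' s i) = ∏ i, μ (X i ⁻¹' s i) :=
    hX.meas_iInter fun i => ⟨s i, hs i, rfl⟩
  rw [measureReal_def, hprod, ENNReal.toReal_prod, ← Finset.card_univ, ← Finset.prod_const]
  refine Finset.prod_le_prod (fun _ _ => hx) fun i _ => ?_
  have := one_sub_measureReal_compl_le μ (X i ⁻¹' s i)
  rw [← Set.preimage_compl] at this
  linarith [htail i, measureReal_def μ (X i ⁻¹' s i)]

lemma mul_exp_neg_le_of_inv_sq_mul_log_le {C c x n : ℝ} (hC : 0 < C) (hc : 0 < c) (hx : x < 1)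
    (h : 1 / c ^ 2 * Real.log (C / (1 - x)) ≤ n) : C * Real.exp (-(c ^ 2 * n)) ≤ 1 - x := by
  have h1x : 0 < 1 - x := by linarith
  have hlog : Real.log (C / (1 - x)) ≤ c ^ 2 * n := by
    rwa [one_div, inv_mul_le_iff₀ (by positivity)] at h
  have := (Real.log_le_iff_le_exp (by positivity)).1 hlog
  rw [div_le_iff₀ h1x] at this
  rw [Real.exp_neg, mul_inv_le_iff₀ (Real.exp_pos _)]
  linarith

lemma rpow_one_div_sq_sub_one_mem_Ioo {P : ℝ} (hP : P ∈ Set.Ioo 0 1) {r : ℕ} (hr : 2 ≤ r) :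
    P ^ ((1 : ℝ) / ((r : ℝ) ^ 2 - 1)) ∈ Set.Ioo 0 1 := by
  have : (2 : ℝ) ≤ r := by exact_mod_cast hr
  have hM : 0 < (r : ℝ) ^ 2 - 1 := by nlinarith
  exact ⟨Real.rpow_pos_of_pos hP.1 _, Real.rpow_lt_one hP.1.le hP.2 (by positivity)⟩

lemma le_rpow_one_div_sq_sub_one_pow {P : ℝ} (hP : P ∈ Set.Ioo 0 1) {r n : ℕ} (hr : 2 ≤ r)
    (hn : n ≤ r * r - 1) : P ≤ (P ^ ((1 : ℝ) / ((r : ℝ) ^ 2 - 1))) ^ n := by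
  have hx := rpow_one_div_sq_sub_one_mem_Ioo hP hr
  have hr2 : ((r * r - 1 : ℕ) : ℝ) = (r : ℝ) ^ 2 - 1 := by
    rw [Nat.cast_sub (by nlinarith), Nat.cast_mul, Nat.cast_one, sq]
  have hM : (r : ℝ) ^ 2 - 1 ≠ 0 := by
    rw [← hr2, Nat.cast_ne_zero]
    have : 1 < r * r := by nlinarith
    omega
  calc P = (P ^ ((1 : ℝ) / ((r : ℝ) ^ 2 - 1))) ^ (r * r - 1) := by
        rw [← Real.rpow_natCast, ← Real.rpow_mul hP.1.le, hr2, one_div_mul_cancel hM,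
          Real.rpow_one]
    _ ≤ _ := pow_le_pow_of_le_one hx.1.le hx.2.le hn

lemma norm_sum_mul_le_of_forall_norm_lt {ι R : Type*} [SeminormedRing R] (s : Finset ι)
    (Z G : ι → R) (t : ι → ℝ) (h : ∀ i ∈ s, ‖G i‖ < t i) :
    ‖∑ i ∈ s, Z i * G i‖ ≤ ∑ i ∈ s, ‖Z i‖ * t i :=
  (norm_sum_le _ _).trans <| Finset.sum_le_sum fun i hi =>
    (norm_mul_le _ _).trans (mul_le_mul_of_nonneg_left (h i hi).le (norm_nonneg _))

theorem stmt_13_general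
    {Ω : Type*} [MeasureSpace Ω] [IsProbabilityMeasure (ℙ : Measure Ω)]
    (r N nd : ℕ) (hr : 2 ≤ r)
    (ε εr : ℝ)
    (b : Fin r × Fin r → Fin nd → Ω → ℝ × ℝ)
    (k' k γ : ℤ × ℤ)
    (hk'γ : k' = (k.1 + γ.1 * N, k.2 + γ.2 * N))
    (hk'HR : -(r * N : ℤ) ≤ 2 * k'.1 ∧ 2 * k'.1 < r * N ∧
             -(r * N : ℤ) ≤ 2 * k'.2 ∧ 2 * k'.2 < r * N)
    (qf : ℤ × ℤ → ℝ × ℝ)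
    (A : Finset (ℤ × ℤ))
    (hA : ∀ α : ℤ × ℤ, α ∈ A ↔
      ((-(r * N : ℤ) ≤ 2 * (k.1 + α.1 * N) ∧ 2 * (k.1 + α.1 * N) < r * N ∧
        -(r * N : ℤ) ≤ 2 * (k.2 + α.2 * N) ∧ 2 * (k.2 + α.2 * N) < r * N) ∧ α ≠ γ))
    (Zγ : ℂ) (hZγ : Zγ ≠ 0) (Z : ℤ × ℤ → ℂ)
    (p₂ P₂ : ℝ) (hP₂ : P₂ ∈ Set.Ioo (0:ℝ) 1)
    (hGindep : iIndepFun
      (fun α : {x // x ∈ A} => fun ω => srG r nd b ((α : ℤ × ℤ) - γ) (qf (α : ℤ × ℤ)) ω) ℙ)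
    (hGconc : ∀ α ∈ A, ∀ c : ℝ, 0 < c →
      (ℙ {ω | Real.sqrt 2 * (c * srL1 (qf α) * ε + srF (qf α) εr)
          ≤ ‖srG r nd b (α - γ) (qf α) ω‖}).toReal ≤ 4 * Real.exp (-(c ^ 2 * nd)))
    (c₂ : ℝ) (hc₂ : 0 < c₂)
    (hc₂p : Real.sqrt 2 * ∑ α ∈ A,
        ‖Z α / Zγ‖ * (c₂ * srL1 (qf α) * ε + srF (qf α) εr) ≤ p₂)
    (hnd' : (1 / c₂ ^ 2) * Real.log (4 / (1 - P₂ ^ ((1 : ℝ) / ((r : ℝ) ^ 2 - 1)))) ≤ (nd : ℝ)) :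
    P₂ ≤ (ℙ {ω | ‖∑ α ∈ A, Z α * srG r nd b (α - γ) (qf α) ω‖
        ≤ p₂ * ‖Zγ‖}).toReal := by
  subst hk'γ
  set t : ℤ × ℤ → ℝ := fun α => Real.sqrt 2 * (c₂ * srL1 (qf α) * ε + srF (qf α) εr)
  have hx := rpow_one_div_sq_sub_one_mem_Ioo hP₂ hr
  have hcard : Fintype.card A ≤ r * r - 1 := by
    rw [Fintype.card_coe]
    exact card_le_of_forall_inHRGrid_ne hk'HR fun α hα => (hA α).1 hα
  have hgood := hGindep.pow_card_le_measureReal_iInter_preimage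
    (s := fun α => Metric.ball 0 (t α)) (fun _ => measurableSet_ball) hx.1.le fun α => by
      simp only [Set.compl_def, mem_ball_zero_iff, not_lt]
      exact (hGconc α α.2 c₂ hc₂).trans
        (mul_exp_neg_le_of_inv_sq_mul_log_le four_pos hc₂ hx.2 hnd')
  have hincl :
      (⋂ α : A, (fun ω => srG r nd b ((α : ℤ × ℤ) - γ) (qf α) ω) ⁻¹' Metric.ball 0 (t α)) ⊆
        {ω | ‖∑ α ∈ A, Z α * srG r nd b (α - γ) (qf α) ω‖ ≤ p₂ * ‖Zγ‖} := by
    intro ω hω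
    simp only [Set.mem_iInter, Set.mem_preimage, mem_ball_zero_iff] at hω
    calc ‖∑ α ∈ A, Z α * srG r nd b (α - γ) (qf α) ω‖ ≤ ∑ α ∈ A, ‖Z α‖ * t α :=
          norm_sum_mul_le_of_forall_norm_lt A _ _ t fun α hα => hω ⟨α, hα⟩
      _ = ‖Zγ‖ * (Real.sqrt 2 * ∑ α ∈ A,
            ‖Z α / Zγ‖ * (c₂ * srL1 (qf α) * ε + srF (qf α) εr)) := by
          rw [Finset.mul_sum, Finset.mul_sum]
          refine Finset.sum_congr rfl fun α _ => ?_
          simp only [t, norm_div]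
          field_simp [norm_ne_zero_iff.2 hZγ]
      _ ≤ p₂ * ‖Zγ‖ := by rw [mul_comm p₂]; gcongr
  calc P₂ ≤ _ := le_rpow_one_div_sq_sub_one_pow hP₂ hr hcard
    _ ≤ _ := hgood
    _ ≤ _ := measureReal_mono hincl

/-- Theorem 1, aliasing part, per frequency: if `n_d ≥ (1/c₂²) log(4/(1 − P₂^{1/(r²−1)}))`
then the total aliasing error is at most `p₂ |Z_γ|` with probability at least `P₂`. -/
theorem stmt_13
    {Ω : Type*} [MeasureSpace Ω] [IsProbabilityMeasure (ℙ : Measure Ω)]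
    (r N nd : ℕ) (hr : 2 ≤ r) (hN : 1 ≤ N) (hnd : 1 ≤ nd)
    (ε εr : ℝ) (hε : 0 < ε) (hεr : εr = ε * r)
    (b : Fin r × Fin r → Fin nd → Ω → ℝ × ℝ)
    (hbmeas : ∀ d j, Measurable (b d j))
    (hbdd : ∀ d j ω, |(b d j ω).1| ≤ εr ∧ |(b d j ω).2| ≤ εr)
    (hindep : iIndepFun
      (fun p : (Fin r × Fin r) × Fin nd => b p.1 p.2) ℙ)
    (hiid : ∀ d j d' j', IdentDistrib (b d j) (b d' j') ℙ ℙ)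
    (k' k γ : ℤ × ℤ)
    (hk'γ : k' = (k.1 + γ.1 * N, k.2 + γ.2 * N))
    (hk'HR : -(r * N : ℤ) ≤ 2 * k'.1 ∧ 2 * k'.1 < r * N ∧
             -(r * N : ℤ) ≤ 2 * k'.2 ∧ 2 * k'.2 < r * N)
    (hkLR : -(N : ℤ) ≤ 2 * k.1 ∧ 2 * k.1 < N ∧ -(N : ℤ) ≤ 2 * k.2 ∧ 2 * k.2 < N)
    (qf : ℤ × ℤ → ℝ × ℝ)
    (hqf : ∀ α : ℤ × ℤ, qf α = (2 * Real.pi * ((k.1 + α.1 * N : ℤ) : ℝ) / ((r : ℝ) * N),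
                                2 * Real.pi * ((k.2 + α.2 * N : ℤ) : ℝ) / ((r : ℝ) * N)))
    (A : Finset (ℤ × ℤ))
    (hA : ∀ α : ℤ × ℤ, α ∈ A ↔
      ((-(r * N : ℤ) ≤ 2 * (k.1 + α.1 * N) ∧ 2 * (k.1 + α.1 * N) < r * N ∧
        -(r * N : ℤ) ≤ 2 * (k.2 + α.2 * N) ∧ 2 * (k.2 + α.2 * N) < r * N) ∧ α ≠ γ))
    (Zγ : ℂ) (hZγ : Zγ ≠ 0) (Z : ℤ × ℤ → ℂ)
    (p₂ P₂ : ℝ) (hp₂ : p₂ ∈ Set.Ioo (0:ℝ) 1) (hP₂ : P₂ ∈ Set.Ioo (0:ℝ) 1)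
    (hGindep : iIndepFun
      (fun α : {x // x ∈ A} => fun ω => srG r nd b ((α : ℤ × ℤ) - γ) (qf (α : ℤ × ℤ)) ω) ℙ)
    (hGconc : ∀ α ∈ A, ∀ c : ℝ, 0 < c →
      (ℙ {ω | Real.sqrt 2 * (c * srL1 (qf α) * ε + srF (qf α) εr)
          ≤ ‖srG r nd b (α - γ) (qf α) ω‖}).toReal ≤ 4 * Real.exp (-(c ^ 2 * nd)))
    (c₂ : ℝ) (hc₂ : 0 < c₂)
    (hc₂p : Real.sqrt 2 * ∑ α ∈ A,
        ‖Z α / Zγ‖ * (c₂ * srL1 (qf α) * ε + srF (qf α) εr) ≤ p₂)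
    (hnd' : (1 / c₂ ^ 2) * Real.log (4 / (1 - P₂ ^ ((1 : ℝ) / ((r : ℝ) ^ 2 - 1)))) ≤ (nd : ℝ)) :
    P₂ ≤ (ℙ {ω | ‖∑ α ∈ A, Z α * srG r nd b (α - γ) (qf α) ω‖
        ≤ p₂ * ‖Zγ‖}).toReal :=
  stmt_13_general r N nd hr ε εr b k' k γ hk'γ hk'HR qf A hA Zγ hZγ Z p₂ P₂ hP₂ hGindep hGconc c₂
    hc₂ hc₂p hnd'
end

section
/- With the setup below, assume the b_{dj} are independent and identically distributed, with common characteristic value χ(q) = E[exp(i q·b_{dj})] for q ∈ ℝ². Let α ∈ ℤ² with k + αN ∈ D_HR. Then E[G_α(k')] = χ(q_γ) if α = γ, and E[G_α(k')] = 0 if α ≠ γ. -/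
open MeasureTheory ProbabilityTheory

/-! The expectation is computed by linearity: each `b_{dj}` contributes `χ(q_α)`, so
`E[G_α(k')] = χ(q_α) · r⁻² Σ_d exp(-2πi (α - γ)·d / r)`. Since `k + αN` and `k + γN` both lie in
`D_HR`, each component of `α - γ` has absolute value `< r`; the sum over `d ∈ {0,…,r-1}²` is a
product of two geometric sums of `r`-th roots of unity, equal to `r²` if `α = γ` and vanishing
otherwise, because a nonzero component is not divisible by `r`. -/

section RootPhase

open Complex

noncomputable def rootPhase (r : ℕ) (m : ℤ) : ℂ :=
  exp (-I * ((2 * Real.pi / (r : ℝ) * (m : ℝ) : ℝ) : ℂ))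

theorem rootPhase_eq_zpow (r : ℕ) (m : ℤ) :
    rootPhase r m = exp (2 * Real.pi * I / r) ^ (-m) := by
  rw [rootPhase, ← exp_int_mul]
  congr 1
  push_cast
  ring

theorem rootPhase_add (r : ℕ) (m n : ℤ) :
    rootPhase r (m + n) = rootPhase r m * rootPhase r n := by
  rw [rootPhase, rootPhase, rootPhase, ← exp_add]
  congr 1
  push_cast
  ring

theorem sum_rootPhase_mul_eq_zero {r : ℕ} {m : ℤ} (hm : ¬ (r : ℤ) ∣ m) :
    ∑ d : Fin r, rootPhase r (m * d) = 0 := by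
  obtain rfl | hr := eq_or_ne r 0
  · simp
  have hprim := isPrimitiveRoot_exp r hr
  set ζ := exp (2 * Real.pi * I / r) ^ (-m)
  have hζ1 : ζ ≠ 1 := by
    rwa [Ne, hprim.zpow_eq_one_iff_dvd, Int.dvd_neg]
  have hζr : ζ ^ r = 1 := by
    rw [← zpow_natCast, ← zpow_mul, mul_comm (-m), zpow_mul, zpow_natCast, hprim.pow_eq_one,
      one_zpow]
  calc ∑ d : Fin r, rootPhase r (m * d)
      = ∑ d ∈ Finset.range r, ζ ^ d := by
        rw [← Fin.sum_univ_eq_sum_range]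
        refine Finset.sum_congr rfl fun d _ => ?_
        rw [rootPhase_eq_zpow, ← zpow_natCast, ← zpow_mul]
        ring_nf
    _ = 0 := by rw [geom_sum_eq hζ1, hζr, sub_self, zero_div]

theorem sum_rootPhase_dot_eq_ite {r : ℕ} {δ : ℤ × ℤ} (h₁ : |δ.1| < r) (h₂ : |δ.2| < r) :
    ∑ d : Fin r × Fin r, rootPhase r (δ.1 * d.1 + δ.2 * d.2) =
      if δ = 0 then (r : ℂ) ^ 2 else 0 := by
  split_ifs with hδ
  · simp [hδ, rootPhase, sq]
  have hfactor : ∑ d : Fin r × Fin r, rootPhase r (δ.1 * d.1 + δ.2 * d.2) =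
      (∑ d : Fin r, rootPhase r (δ.1 * d)) * ∑ d : Fin r, rootPhase r (δ.2 * d) := by
    simp only [Fintype.sum_prod_type, rootPhase_add, Finset.sum_mul_sum]
  have hndvd : ∀ {m : ℤ}, m ≠ 0 → |m| < r → ¬ (r : ℤ) ∣ m :=
    fun hm hlt hdvd => hm (Int.eq_zero_of_abs_lt_dvd hdvd hlt)
  rw [hfactor]
  by_cases h0 : δ.1 = 0
  · rw [sum_rootPhase_mul_eq_zero (hndvd (fun h => hδ (Prod.ext h0 h)) h₂), mul_zero]
  · rw [sum_rootPhase_mul_eq_zero (hndvd h0 h₁), zero_mul]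

end RootPhase

theorem abs_sub_lt_of_two_mul_mem_Ico {r N : ℕ} {k a c : ℤ}
    (ha₀ : -(r * N : ℤ) ≤ 2 * (k + a * N)) (ha₁ : 2 * (k + a * N) < r * N)
    (hc₀ : -(r * N : ℤ) ≤ 2 * (k + c * N)) (hc₁ : 2 * (k + c * N) < r * N) :
    |a - c| < r := by
  have hN : (0 : ℤ) < N := pos_of_mul_pos_right (by linarith : (0 : ℤ) < r * N) (by positivity)
  rw [abs_lt]
  constructor <;> nlinarith

section Expectation

variable {Ω : Type*} [MeasureSpace Ω]

open Complex in
noncomputable def planeWave (q x : ℝ × ℝ) : ℂ := exp (I * ((q.1 * x.1 + q.2 * x.2 : ℝ) : ℂ))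

theorem continuous_planeWave (q : ℝ × ℝ) : Continuous (planeWave q) := by
  unfold planeWave; fun_prop

theorem integrable_planeWave_comp [IsFiniteMeasure (ℙ : Measure Ω)] {X : Ω → ℝ × ℝ}
    (hX : AEMeasurable X) (q : ℝ × ℝ) : Integrable (fun ω => planeWave q (X ω)) := by
  have hmeas := (continuous_planeWave q).measurable.comp_aemeasurable hX
  refine .of_bound hmeas.aestronglyMeasurable 1 (.of_forall fun ω => ?_)
  rw [planeWave, Complex.norm_exp_I_mul_ofReal]

theorem integral_srG [IsFiniteMeasure (ℙ : Measure Ω)] {r nd : ℕ}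
    {b : Fin r × Fin r → Fin nd → Ω → ℝ × ℝ} (hb : ∀ d j, AEMeasurable (b d j))
    (δ : ℤ × ℤ) (q : ℝ × ℝ) {c : ℂ} (hc : ∀ d j, ∫ ω, planeWave q (b d j ω) = c) :
    ∫ ω, srG r nd b δ q ω =
      ((r : ℂ) ^ 2 * nd)⁻¹ *
        ((∑ d : Fin r × Fin r, rootPhase r (δ.1 * d.1 + δ.2 * d.2)) * (nd * c)) := by
  have hint := fun d j => integrable_planeWave_comp (hb d j) q
  change ∫ ω, ((r : ℂ) ^ 2 * nd)⁻¹ * ∑ d : Fin r × Fin r, ∑ j : Fin nd,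
    rootPhase r (δ.1 * d.1 + δ.2 * d.2) * planeWave q (b d j ω) = _
  rw [integral_const_mul, integral_finsetSum _ fun d _ =>
    integrable_finsetSum _ fun j _ => (hint d j).const_mul _, Finset.sum_mul]
  congr 1
  refine Finset.sum_congr rfl fun d _ => ?_
  simp only [integral_finsetSum _ fun j _ => (hint d j).const_mul _, integral_const_mul, hc,
    Finset.sum_const, Finset.card_univ, Fintype.card_fin, nsmul_eq_mul]
  ring

end Expectation

theorem stmt_17_general
    {Ω : Type*} [MeasureSpace Ω] [IsProbabilityMeasure (ℙ : Measure Ω)]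
    (r N nd : ℕ) (hnd : 1 ≤ nd)
    (b : Fin r × Fin r → Fin nd → Ω → ℝ × ℝ)
    (hbmeas : ∀ d j, Measurable (b d j))
    (k' k γ : ℤ × ℤ)
    (hk'γ : k' = (k.1 + γ.1 * N, k.2 + γ.2 * N))
    (hk'HR : -(r * N : ℤ) ≤ 2 * k'.1 ∧ 2 * k'.1 < r * N ∧
             -(r * N : ℤ) ≤ 2 * k'.2 ∧ 2 * k'.2 < r * N)
    (qf : ℤ × ℤ → ℝ × ℝ)
    (χ : ℝ × ℝ → ℂ)
    (hχ : ∀ (q : ℝ × ℝ) (d : Fin r × Fin r) (j : Fin nd),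
      χ q = ∫ ω, Complex.exp (Complex.I * ((q.1 * (b d j ω).1 + q.2 * (b d j ω).2 : ℝ) : ℂ)))
    (α : ℤ × ℤ)
    (hαHR : -(r * N : ℤ) ≤ 2 * (k.1 + α.1 * N) ∧ 2 * (k.1 + α.1 * N) < r * N ∧
             -(r * N : ℤ) ≤ 2 * (k.2 + α.2 * N) ∧ 2 * (k.2 + α.2 * N) < r * N)
    :
    (∫ ω, srG r nd b (α - γ) (qf α) ω) = if α = γ then χ (qf γ) else 0 := by
  subst hk'γ
  obtain ⟨hγ₁, hγ₁', hγ₂, hγ₂'⟩ := hk'HR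
  obtain ⟨hα₁, hα₁', hα₂, hα₂'⟩ := hαHR
  have h₁ := abs_sub_lt_of_two_mul_mem_Ico hα₁ hα₁' hγ₁ hγ₁'
  have h₂ := abs_sub_lt_of_two_mul_mem_Ico hα₂ hα₂' hγ₂ hγ₂'
  rw [integral_srG (fun d j => (hbmeas d j).aemeasurable) _ _ fun d j => (hχ (qf α) d j).symm,
    sum_rootPhase_dot_eq_ite (δ := α - γ) h₁ h₂]
  rcases eq_or_ne α γ with rfl | hαγ
  · have hr : (r : ℂ) ≠ 0 := by
      have : (0 : ℤ) < r := (abs_nonneg _).trans_lt h₁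
      exact_mod_cast this.ne'
    have hndC : (nd : ℂ) ≠ 0 := by exact_mod_cast (by omega : nd ≠ 0)
    simp only [sub_self, if_true]
    field_simp
  · simp [sub_eq_zero, hαγ]

/-- Expectation of the coefficients `G_α(k')` (equation (83)): `E[G_α(k')] = χ(q_γ)` if
`α = γ`, and `E[G_α(k')] = 0` otherwise. -/
theorem stmt_17
    {Ω : Type*} [MeasureSpace Ω] [IsProbabilityMeasure (ℙ : Measure Ω)]
    (r N nd : ℕ) (hr : 2 ≤ r) (hN : 1 ≤ N) (hnd : 1 ≤ nd)
    (ε εr : ℝ) (hε : 0 < ε) (hεr : εr = ε * r)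
    (b : Fin r × Fin r → Fin nd → Ω → ℝ × ℝ)
    (hbmeas : ∀ d j, Measurable (b d j))
    (hbdd : ∀ d j ω, |(b d j ω).1| ≤ εr ∧ |(b d j ω).2| ≤ εr)
    (hindep : iIndepFun
      (fun p : (Fin r × Fin r) × Fin nd => b p.1 p.2) ℙ)
    (hiid : ∀ d j d' j', IdentDistrib (b d j) (b d' j') ℙ ℙ)
    (k' k γ : ℤ × ℤ)
    (hk'γ : k' = (k.1 + γ.1 * N, k.2 + γ.2 * N))
    (hk'HR : -(r * N : ℤ) ≤ 2 * k'.1 ∧ 2 * k'.1 < r * N ∧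
             -(r * N : ℤ) ≤ 2 * k'.2 ∧ 2 * k'.2 < r * N)
    (hkLR : -(N : ℤ) ≤ 2 * k.1 ∧ 2 * k.1 < N ∧ -(N : ℤ) ≤ 2 * k.2 ∧ 2 * k.2 < N)
    (qf : ℤ × ℤ → ℝ × ℝ)
    (hqf : ∀ α : ℤ × ℤ, qf α = (2 * Real.pi * ((k.1 + α.1 * N : ℤ) : ℝ) / ((r : ℝ) * N),
                                2 * Real.pi * ((k.2 + α.2 * N : ℤ) : ℝ) / ((r : ℝ) * N)))
    (χ : ℝ × ℝ → ℂ)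
    (hχ : ∀ (q : ℝ × ℝ) (d : Fin r × Fin r) (j : Fin nd),
      χ q = ∫ ω, Complex.exp (Complex.I * ((q.1 * (b d j ω).1 + q.2 * (b d j ω).2 : ℝ) : ℂ)))
    (α : ℤ × ℤ)
    (hαHR : -(r * N : ℤ) ≤ 2 * (k.1 + α.1 * N) ∧ 2 * (k.1 + α.1 * N) < r * N ∧
             -(r * N : ℤ) ≤ 2 * (k.2 + α.2 * N) ∧ 2 * (k.2 + α.2 * N) < r * N)
    :
    (∫ ω, srG r nd b (α - γ) (qf α) ω) = if α = γ then χ (qf γ) else 0 :=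
  stmt_17_general r N nd hnd b hbmeas k' k γ hk'γ hk'HR qf χ hχ α hαHR
end
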